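/- arXiv:0808.1238 — 2 statements merged into one kernel-verified Lean document; each statement's English description precedes it below -/
import Mathlib

section
/- Let σ be a finite type, let n ≥ 1, and for each i : Fin n let F_i : (Fin n → σ) → (Fin n → σ) be a map that is local at i. Suppose the family (F_i) is ω-independent, i.e. there is a set P ⊆ (Fin n → σ) such that Per([F,ω]) = P for every fair update order ω. Then for each i there exists a bijection F'_i : (Fin n → σ) → (Fin n → σ) that is local at i and satisfies F'_i(y) = F_i(y) for every y ∈ P; consequently F'_i '' P = P for every i. -/
/-!
Let `g` be the SDS map of the fair order `0, 1, …, n-1`; appending `i` gives a fair order whose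
SDS map is `F i ∘ g`. Every map permutes its own periodic points, so `g` and `F i ∘ g` both
restrict to bijections of `P`, hence so does `F i`. Extending `F i` on `P` by the identity off `P`
gives a bijection that is still local at `i`.
-/

open Function Set

namespace Set

variable {α β γ : Type*} {s : Set α} {t : Set β} {u : Set γ}

theorem BijOn.of_comp {f : α → γ} {g : γ → β} (hgf : BijOn (g ∘ f) s t) (hf : BijOn f s u) :
    BijOn g u t := by
  refine ⟨?_, hf.image_eq ▸ hgf.injOn.image_of_comp, hgf.surjOn.of_comp hf.mapsTo⟩
  intro y hy
  obtain ⟨x, hx, rfl⟩ := hf.surjOn hy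
  exact hgf.mapsTo hx

theorem BijOn.bijective_piecewise_id {f : α → α} [∀ x, Decidable (x ∈ s)] (hf : BijOn f s s) :
    Bijective (s.piecewise f id) := by
  refine ⟨(injective_piecewise_iff s).2 ⟨hf.injOn, injOn_id _, ?_⟩, ?_⟩
  · rintro x hx y hy rfl
    exact hy (hf.mapsTo hx)
  · rw [← range_eq_univ, range_piecewise, hf.image_eq, image_id, union_compl_self]

theorem BijOn.image_piecewise_id {f : α → α} [∀ x, Decidable (x ∈ s)] (hf : BijOn f s s) :
    s.piecewise f id '' s = s :=
  (piecewise_eqOn s f id).image_eq.trans hf.image_eq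

theorem piecewise_id_apply_apply_eq_self {ι σ : Type*} {F : (ι → σ) → ι → σ} {j : ι}
    (hF : ∀ y, F y j = y j) (s : Set (ι → σ)) [∀ x, Decidable (x ∈ s)] (y : ι → σ) :
    s.piecewise F id y j = y j := by
  by_cases hy : y ∈ s <;> simp [hy, hF]

end Set

theorem Function.bijOn_periodicPts_of_comp {α : Type*} {f g : α → α} {P : Set α}
    (hg : periodicPts g = P) (hfg : periodicPts (f ∘ g) = P) : BijOn f P P :=
  (hfg ▸ bijOn_periodicPts (f ∘ g)).of_comp (hg ▸ bijOn_periodicPts g)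

/-- The paper's `[F, ω] = F_{ω_m} ∘ ⋯ ∘ F_{ω_1}`. -/
def sdsMap {ι X : Type*} (F : ι → X → X) (ω : List ι) : X → X :=
  fun x => ω.foldl (fun s j => F j s) x

theorem sdsMap_append_singleton {ι X : Type*} (F : ι → X → X) (ω : List ι) (i : ι) :
    sdsMap F (ω ++ [i]) = F i ∘ sdsMap F ω := by
  ext x
  simp [sdsMap, List.foldl_append]

theorem stmt_4_general {σ : Type*} {n : ℕ}
    (F : Fin n → (Fin n → σ) → (Fin n → σ))
    (hloc : ∀ (i : Fin n) (y : Fin n → σ) (j : Fin n), j ≠ i → F i y j = y j)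
    (P : Set (Fin n → σ))
    (hP : ∀ ω : List (Fin n), (∀ i : Fin n, i ∈ ω) →
      {y : Fin n → σ | ∃ k : ℕ, 1 ≤ k ∧
        (fun z : Fin n → σ => ω.foldl (fun s j => F j s) z)^[k] y = y} = P) :
    ∀ i : Fin n, ∃ F' : (Fin n → σ) → (Fin n → σ),
      Function.Bijective F' ∧
      (∀ (y : Fin n → σ) (j : Fin n), j ≠ i → F' y j = y j) ∧
      (∀ y ∈ P, F' y = F i y) ∧
      F' '' P = P := by
  classical
  intro i
  -- `periodicPts` unfolds to exactly the set appearing in `hP`.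
  have hPer : ∀ ω : List (Fin n), (∀ j, j ∈ ω) → periodicPts (sdsMap F ω) = P := hP
  have hbij : BijOn (F i) P P := by
    refine bijOn_periodicPts_of_comp (hPer _ List.mem_finRange) ?_
    rw [← sdsMap_append_singleton]
    exact hPer _ fun j => List.mem_append_left _ (List.mem_finRange j)
  exact ⟨P.piecewise (F i) id, hbij.bijective_piecewise_id,
    fun y j hj => piecewise_id_apply_apply_eq_self (fun y => hloc i y j hj) P y,
    fun _ hy => piecewise_eq_of_mem P _ _ hy, hbij.image_piecewise_id⟩

/-- For an ω-independent family of local functions `F` with common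
periodic set `P`, each `F i` agrees on `P` with a bijection `F'` that is local
at `i`; moreover `F' '' P = P`. -/
theorem stmt_4 {σ : Type*} [Fintype σ] {n : ℕ} (hn : 1 ≤ n)
    (F : Fin n → (Fin n → σ) → (Fin n → σ))
    (hloc : ∀ (i : Fin n) (y : Fin n → σ) (j : Fin n), j ≠ i → F i y j = y j)
    (P : Set (Fin n → σ))
    (hP : ∀ ω : List (Fin n), (∀ i : Fin n, i ∈ ω) →
      {y : Fin n → σ | ∃ k : ℕ, 1 ≤ k ∧
        (fun z : Fin n → σ => ω.foldl (fun s j => F j s) z)^[k] y = y} = P) :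
    ∀ i : Fin n, ∃ F' : (Fin n → σ) → (Fin n → σ),
      Function.Bijective F' ∧
      (∀ (y : Fin n → σ) (j : Fin n), j ≠ i → F' y j = y j) ∧
      (∀ y ∈ P, F' y = F i y) ∧
      F' '' P = P :=
  stmt_4_general F hloc P hP
end

section
/- Fix n > 3. For each i : Fin n let T_i be the permutation of states (Fin n → ZMod 2) that replaces y_i by y_i + 1 when y_{i−1} = y_{i+1} = 0 and leaves the state unchanged otherwise (the Wolfram rule 201 local function at i). Let G₂₀₁ be the subgroup of the permutation group of (Fin n → ZMod 2) generated by {T_i ∣ i : Fin n}. Then every orbit of G₂₀₁ on (Fin n → ZMod 2) contains exactly one state belonging to N_D; consequently the number of orbits equals the cardinality of N_D. -/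
/-!
Erasing every isolated 1 of a state gives a normal form without isolated 1s. The move `T i`
only acts when both neighbours of `i` are 0: then site `i` is erased whether it holds 0 or 1,
and every site whose isolation could change holds 0. So the normal form is constant on orbits.
Conversely `T i` turns an isolated 1 at `i` into 0, so by induction on the number of 1s every
state lies in the orbit of its normal form. Hence orbits correspond exactly to normal forms,
i.e. to the states without isolated 1s.
-/

open MulAction Function Finset

section ClosureRange

variable {α β ι : Type*} (T : ι → Equiv.Perm α)

theorem apply_mem_orbit_closure_range (i : ι) (x : α) :
    T i x ∈ orbit (Subgroup.closure (Set.range T)) x :=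
  ⟨⟨T i, Subgroup.subset_closure ⟨i, rfl⟩⟩, rfl⟩

theorem apply_eq_of_mem_orbit_closure_range {f : α → β} (hf : ∀ i x, f (T i x) = f x)
    {x y : α} (hy : y ∈ orbit (Subgroup.closure (Set.range T)) x) : f y = f x := by
  obtain ⟨⟨g, hg⟩, rfl⟩ := hy
  suffices ∀ x, f (g x) = f x from this x
  induction hg using Subgroup.closure_induction with
  | mem g hg => obtain ⟨i, rfl⟩ := hg; exact hf i
  | one => exact fun _ => rfl
  | mul g h _ _ ihg ihh => exact fun x => (ihg (h x)).trans (ihh x)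
  | inv g _ ihg => exact fun x => by simpa using (ihg (g⁻¹ x)).symm

end ClosureRange

theorem card_filter_update_lt {ι M : Type*} [Fintype ι] [DecidableEq ι] [DecidableEq M]
    {y : ι → M} {i : ι} {a b : M} (h : y i = a) (hb : b ≠ a) :
    #{j | update y i b j = a} < #{j | y j = a} := by
  have hfilter : ({j | update y i b j = a} : Finset ι) = ({j | y j = a} : Finset ι).erase i := by
    ext j
    by_cases hji : j = i <;> simp [hji, hb]
  rw [hfilter]
  exact card_erase_lt_of_mem (by simpa using h)

theorem Fin.one_ne_zero_of_one_lt {n : ℕ} [NeZero n] (hn : 1 < n) : (1 : Fin n) ≠ 0 := by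
  simp only [ne_eq, Fin.ext_iff, Fin.coe_ofNat_eq_mod, Nat.zero_mod, Nat.one_mod_eq_zero_iff]
  omega

namespace Rule201

variable {n : ℕ} [NeZero n]

abbrev IsIsolatedOne (y : Fin n → ZMod 2) (i : Fin n) : Prop :=
  y (i - 1) = 0 ∧ y i = 1 ∧ y (i + 1) = 0

def eraseIsolatedOnes (y : Fin n → ZMod 2) : Fin n → ZMod 2 :=
  fun i => if IsIsolatedOne y i then 0 else y i

def rule201 (i : Fin n) (y : Fin n → ZMod 2) : Fin n → ZMod 2 :=
  if y (i - 1) = 0 ∧ y (i + 1) = 0 then update y i (y i + 1) else y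

variable {y z : Fin n → ZMod 2} {i j : Fin n}

theorem eraseIsolatedOnes_apply_eq_one_iff :
    eraseIsolatedOnes y j = 1 ↔ y j = 1 ∧ (y (j - 1) = 1 ∨ y (j + 1) = 1) := by
  unfold eraseIsolatedOnes IsIsolatedOne
  generalize y (j - 1) = a, y j = b, y (j + 1) = c
  revert a b c; decide

theorem eraseIsolatedOnes_apply_eq_zero_of_eq_zero (h : y j = 0) :
    eraseIsolatedOnes y j = 0 := by
  simp [eraseIsolatedOnes, h]

theorem eraseIsolatedOnes_apply_eq_zero_of_neighbours (h₁ : y (j - 1) = 0)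
    (h₂ : y (j + 1) = 0) : eraseIsolatedOnes y j = 0 := by
  unfold eraseIsolatedOnes IsIsolatedOne
  rw [h₁, h₂]
  generalize y j = b
  revert b; decide

theorem eraseIsolatedOnes_apply_congr (h₁ : z (j - 1) = y (j - 1)) (h : z j = y j)
    (h₂ : z (j + 1) = y (j + 1)) : eraseIsolatedOnes z j = eraseIsolatedOnes y j := by
  simp only [eraseIsolatedOnes, IsIsolatedOne, h₁, h, h₂]

theorem eraseIsolatedOnes_update (hn : 1 < n) (h₁ : y (i - 1) = 0) (h₂ : y (i + 1) = 0)
    (b : ZMod 2) : eraseIsolatedOnes (update y i b) = eraseIsolatedOnes y := by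
  have h10 := Fin.one_ne_zero_of_one_lt hn
  funext j
  by_cases hji : j = i
  · subst hji
    have hl : j - 1 ≠ j := by rw [Ne, sub_eq_self]; exact h10
    have hr : j + 1 ≠ j := add_ne_left.mpr h10
    rw [eraseIsolatedOnes_apply_eq_zero_of_neighbours h₁ h₂,
      eraseIsolatedOnes_apply_eq_zero_of_neighbours (by simpa [hl]) (by simpa [hr])]
  by_cases hyj : y j = 0
  · rw [eraseIsolatedOnes_apply_eq_zero_of_eq_zero hyj,
      eraseIsolatedOnes_apply_eq_zero_of_eq_zero (by simpa [hji])]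
  -- `y j ≠ 0` while both neighbours of `i` vanish, so `i` is not in the neighbourhood of `j`
  have hl : j - 1 ≠ i := by rintro rfl; exact hyj (by simpa using h₂)
  have hr : j + 1 ≠ i := by rintro rfl; exact hyj (by simpa using h₁)
  exact eraseIsolatedOnes_apply_congr (by simp [hl]) (by simp [hji]) (by simp [hr])

theorem eraseIsolatedOnes_rule201 (hn : 1 < n) (i : Fin n) (y : Fin n → ZMod 2) :
    eraseIsolatedOnes (rule201 i y) = eraseIsolatedOnes y := by
  unfold rule201
  split_ifs with h
  · exact eraseIsolatedOnes_update hn h.1 h.2 _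
  · rfl

theorem not_isIsolatedOne_eraseIsolatedOnes (y : Fin n → ZMod 2) (j : Fin n) :
    ¬ IsIsolatedOne (eraseIsolatedOnes y) j := by
  rintro ⟨hl, hj, hr⟩
  obtain ⟨hyj, hl' | hr'⟩ := eraseIsolatedOnes_apply_eq_one_iff.mp hj
  · have := eraseIsolatedOnes_apply_eq_one_iff.mpr ⟨hl', Or.inr (by simpa using hyj)⟩
    simp [hl] at this
  · have := eraseIsolatedOnes_apply_eq_one_iff.mpr ⟨hr', Or.inl (by simpa using hyj)⟩
    simp [hr] at this

theorem eraseIsolatedOnes_eq_self (h : ∀ i, ¬ IsIsolatedOne y i) : eraseIsolatedOnes y = y :=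
  funext fun j => if_neg (h j)

theorem rule201_of_isIsolatedOne (h : IsIsolatedOne y i) : rule201 i y = update y i 0 := by
  rw [rule201, if_pos ⟨h.1, h.2.2⟩, h.2.1]
  rfl

variable {T : Fin n → Equiv.Perm (Fin n → ZMod 2)}

theorem eraseIsolatedOnes_mem_orbit (hn : 1 < n) (hT : ∀ i y, T i y = rule201 i y)
    (y : Fin n → ZMod 2) :
    eraseIsolatedOnes y ∈ orbit (Subgroup.closure (Set.range T)) y := by
  induction hk : #{j | y j = 1} using Nat.strong_induction_on generalizing y with
  | _ k ih =>
  by_cases hy : ∃ i, IsIsolatedOne y i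
  · obtain ⟨i, hi⟩ := hy
    have hTi : T i y = update y i 0 := (hT i y).trans (rule201_of_isIsolatedOne hi)
    have hfewer : #{j | T i y j = 1} < k := hk ▸ hTi ▸ card_filter_update_lt hi.2.1 zero_ne_one
    have hstep := ih _ hfewer (T i y) rfl
    rw [hT, eraseIsolatedOnes_rule201 hn, ← hT,
      orbit_eq_iff.mpr (apply_mem_orbit_closure_range T i y)] at hstep
    exact hstep
  · push Not at hy
    rw [eraseIsolatedOnes_eq_self hy]
    exact mem_orbit_self y

theorem mem_orbit_iff_eraseIsolatedOnes_eq (hn : 1 < n) (hT : ∀ i y, T i y = rule201 i y)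
    {y z : Fin n → ZMod 2} :
    z ∈ orbit (Subgroup.closure (Set.range T)) y ↔
      eraseIsolatedOnes z = eraseIsolatedOnes y := by
  refine ⟨apply_eq_of_mem_orbit_closure_range T fun i x => ?_, fun h => ?_⟩
  · rw [hT]; exact eraseIsolatedOnes_rule201 hn i x
  · rw [← orbit_eq_iff, ← orbit_eq_iff.mpr (eraseIsolatedOnes_mem_orbit hn hT z),
      ← orbit_eq_iff.mpr (eraseIsolatedOnes_mem_orbit hn hT y), h]

end Rule201

open Rule201 in
/-- For Wolfram rule 201, every orbit of the dynamics group on the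
set of states contains exactly one state in `N_D` (no isolated 1s); hence the
number of orbits equals the cardinality of `N_D`. -/
theorem stmt_12 {n : ℕ} [NeZero n] (hn : 3 < n)
    (T : Fin n → Equiv.Perm (Fin n → ZMod 2))
    (hT : ∀ (i : Fin n) (y : Fin n → ZMod 2),
      T i y = if y (i - 1) = 0 ∧ y (i + 1) = 0
        then Function.update y i (y i + 1) else y) :
    (∀ y : Fin n → ZMod 2, ∃! z : Fin n → ZMod 2,
      z ∈ MulAction.orbit ↥(Subgroup.closure (Set.range T)) y ∧
        ∀ i : Fin n, ¬(z (i - 1) = 0 ∧ z i = 1 ∧ z (i + 1) = 0)) ∧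
    Nat.card (Quotient (MulAction.orbitRel
        ↥(Subgroup.closure (Set.range T)) (Fin n → ZMod 2)))
      = Nat.card {y : Fin n → ZMod 2 |
          ∀ i : Fin n, ¬(y (i - 1) = 0 ∧ y i = 1 ∧ y (i + 1) = 0)} := by
  have h1n : 1 < n := by omega
  have mem_orbit_iff {y z : Fin n → ZMod 2} :=
    mem_orbit_iff_eraseIsolatedOnes_eq (y := y) (z := z) h1n hT
  refine ⟨fun y => ⟨eraseIsolatedOnes y, ⟨eraseIsolatedOnes_mem_orbit h1n hT y,
    not_isIsolatedOne_eraseIsolatedOnes y⟩, fun z ⟨hz, hz_free⟩ => ?_⟩, ?_⟩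
  · rw [← mem_orbit_iff.mp hz, eraseIsolatedOnes_eq_self hz_free]
  · let normalForm (y : Fin n → ZMod 2) : {y : Fin n → ZMod 2 | ∀ i, ¬ IsIsolatedOne y i} :=
      ⟨eraseIsolatedOnes y, not_isIsolatedOne_eraseIsolatedOnes y⟩
    have hsurj : Function.Surjective normalForm := fun z =>
      ⟨z, Subtype.ext (eraseIsolatedOnes_eq_self z.2)⟩
    refine Nat.card_congr <| (Quotient.congrRight fun y z => ?_).trans
      (Setoid.quotientKerEquivOfSurjective normalForm hsurj)
    rw [orbitRel_apply, mem_orbit_iff, Setoid.ker_def, Subtype.ext_iff]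
end
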